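/- arXiv:2204.12719 — 4 statements merged into one kernel-verified Lean document; each statement's English description precedes it below -/
import Mathlib

section
/- Assume the open convex sets Ω₀ and Ω₁ satisfy the strict convexity condition; in the case d = 2 assume additionally the cone condition. Then for every point x ∈ Ω there exists a closed line segment ℓ ⊆ Ω passing through x whose two endpoints lie on ∂Ω₀. -/
/-!
Separate `x` from `Ω₁` by a functional `f` with `f < f x` on `Ω₁`. A line through `x` along a
direction `v` meets `cl Ω₀` in a compact segment with endpoints on `∂Ω₀` as soon as neither `v`
nor `-v` is a recession direction of `cl Ω₀`; if moreover the line misses `Ω₁`, this segment is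
the one sought. Every line along `ker f` misses `Ω₁`. Strict convexity makes the recession cone
of `cl Ω₀` pointed, so the cone and its negative are closed sets meeting only in `0`; for
`d ≥ 3` they cannot cover the connected set `ker f \ {0}`.

For `d = 2` suppose no direction works. Then the kernel is spanned by a recession direction `v`,
and we tilt it towards `Ω₁`: `wₙ = -v + εₙ (x₁ - x)` with `x₁ ∈ Ω₁`. By the cone condition
`f ≤ 0` on recession directions, so `-wₙ` is not one, and neither is `wₙ` for large `n`; hence
the ray from `x` along `wₙ` meets `Ω₁`. Letting `n → ∞`, either `cl Ω₁` reaches the supporting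
line `{f = f x}` at some `x - l v` and then contains the segment from there to `x - l v + v`
inside that line, or `-v` recedes in `cl Ω₁` as `v` does. Both contradict the strict convexity
of `cl Ω₁`.
-/

open Set Filter Topology

noncomputable section

/-- The cone condition: every ray contained in `Ω₀` has a translate contained in `Ω₁`. -/
def ConeCondition {d : ℕ} (Ω₀ Ω₁ : Set (EuclideanSpace ℝ (Fin d))) : Prop :=
  ∀ x v : EuclideanSpace ℝ (Fin d), v ≠ 0 →
    (∀ t : ℝ, 0 ≤ t → x + t • v ∈ Ω₀) →
    ∃ y : EuclideanSpace ℝ (Fin d), ∀ t : ℝ, 0 ≤ t → y + t • v ∈ Ω₁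

section

variable {E : Type*} [NormedAddCommGroup E] [NormedSpace ℝ E]

def recessionCone (K : Set E) : Set E :=
  {v | ∀ x ∈ K, ∀ t : ℝ, 0 ≤ t → x + t • v ∈ K}

theorem isClosed_recessionCone {K : Set E} (hK : IsClosed K) : IsClosed (recessionCone K) := by
  simp only [recessionCone, ofPred_forall]
  exact isClosed_iInter fun x => isClosed_iInter fun _ => isClosed_iInter fun t =>
    isClosed_iInter fun _ => hK.preimage (by fun_prop)

theorem Convex.mem_recessionCone_of_ray {K : Set E} (hconv : Convex ℝ K) (hK : IsClosed K)
    {y v : E} (hray : ∀ t : ℝ, 0 ≤ t → y + t • v ∈ K) : v ∈ recessionCone K := by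
  intro q hq t ht
  have hlim : Tendsto (fun s : ℝ => q + t • v + s • (y - q)) (𝓝[>] 0) (𝓝 (q + t • v)) := by
    have : Continuous fun s : ℝ => q + t • v + s • (y - q) := by fun_prop
    simpa using (this.tendsto 0).mono_left nhdsWithin_le_nhds
  refine hK.mem_of_tendsto hlim ?_
  filter_upwards [Ioo_mem_nhdsGT zero_lt_one] with s ⟨hs0, hs1⟩
  convert hconv hq (hray (t / s) (by positivity)) (sub_nonneg.2 hs1.le) hs0.le (by ring) using 1
  rw [smul_add, smul_smul, mul_div_cancel₀ _ hs0.ne']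
  module

theorem Convex.recessionCone_closure_subset {U : Set E} (hconv : Convex ℝ U) (hU : IsOpen U) :
    recessionCone (closure U) ⊆ recessionCone U := by
  intro v hv q hq t ht
  have h := hconv.combo_interior_closure_mem_interior (hU.interior_eq.symm ▸ hq)
    (hv q (subset_closure hq) (2 * t) (by positivity)) one_half_pos one_half_pos.le (add_halves 1)
  rw [hU.interior_eq] at h
  convert h using 1
  module

theorem IsOpen.closure_ne_univ {U : Set E} (hU : IsOpen U) (hconv : Convex ℝ U)
    (hne : U.Nonempty) (hU' : U ≠ univ) : closure U ≠ univ := by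
  intro h
  have := hconv.interior_closure_eq_interior_of_nonempty_interior (by rwa [hU.interior_eq])
  rw [h, interior_univ, hU.interior_eq] at this
  exact hU' this.symm

theorem StrictConvex.eq_zero_of_mem_recessionCone {S : Set E} (hsc : StrictConvex ℝ S)
    (hS : IsClosed S) (hne : S.Nonempty) (hS' : S ≠ univ) {v : E} (hv : v ∈ recessionCone S)
    (hv' : -v ∈ recessionCone S) : v = 0 := by
  obtain ⟨p, hp⟩ := nonempty_frontier_iff.2 ⟨hne, hS'⟩
  have hpS := hS.frontier_subset hp
  by_contra hv0
  have hne : p + (1 : ℝ) • -v ≠ p + (1 : ℝ) • v := fun h => hv0 <| (smul_eq_zero.1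
    (by rw [two_smul]; simpa [neg_eq_iff_add_eq_zero] using h : (2 : ℝ) • v = 0)).resolve_left
      two_ne_zero
  have h := hsc (hv' p hpS 1 zero_le_one) (hv p hpS 1 zero_le_one) hne
    one_half_pos one_half_pos (add_halves 1)
  rw [hS.frontier_eq] at hp
  exact hp.2 (by convert h using 1; module)

theorem apply_lt_of_mem_interior {S : Set E} {f : StrongDual ℝ E} (hf : f ≠ 0) {c : ℝ}
    (hle : ∀ w ∈ S, f w ≤ c) {z : E} (hz : z ∈ interior S) : f z < c := by
  have : f '' interior S ⊆ interior (Iic c) :=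
    interior_maximal (image_subset_iff.2 fun w hw => hle w (interior_subset hw))
      (f.isOpenMap_of_ne_zero hf _ isOpen_interior)
  rw [interior_Iic] at this
  exact this (mem_image_of_mem f hz)

theorem StrictConvex.eq_of_apply_eq {S : Set E} (hsc : StrictConvex ℝ S) {f : StrongDual ℝ E}
    (hf : f ≠ 0) {c : ℝ} (hle : ∀ w ∈ S, f w ≤ c) {p q : E} (hp : p ∈ S) (hq : q ∈ S)
    (hfp : f p = c) (hfq : f q = c) : p = q := by
  by_contra hpq
  have := apply_lt_of_mem_interior hf hle (hsc hp hq hpq one_half_pos one_half_pos (add_halves 1))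
  simp [hfp, hfq] at this
  linarith

theorem apply_nonpos_of_forall_add_smul_le {f : StrongDual ℝ E} {c : ℝ} {y v : E}
    (hray : ∀ t : ℝ, 0 ≤ t → f (y + t • v) ≤ c) : f v ≤ 0 := by
  by_contra! hv
  have := hray ((|c - f y| + 1) / f v) (by positivity)
  rw [map_add, map_smul, smul_eq_mul, div_mul_cancel₀ _ hv.ne'] at this
  linarith [le_abs_self (c - f y)]

theorem image_segment_add_smul (x v : E) (a b : ℝ) :
    (fun t : ℝ => x + t • v) '' segment ℝ a b = segment ℝ (x + a • v) (x + b • v) := by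
  have h : ⇑(AffineMap.lineMap x (x + v) : ℝ →ᵃ[ℝ] E) = fun t => x + t • v := by
    ext t
    simp [AffineMap.lineMap_apply, add_comm]
  rw [← h, image_segment, h]

theorem Convex.exists_nonneg_add_smul_mem_frontier {K : Set E} (hconv : Convex ℝ K)
    (hK : IsClosed K) {x v : E} (hx : x ∈ K) (hv : v ∉ recessionCone K) :
    ∃ b : ℝ, 0 ≤ b ∧ x + b • v ∈ frontier K := by
  have hray : ¬ ∀ t : ℝ, 0 ≤ t → x + t • v ∈ K := fun h =>
    hv (hconv.mem_recessionCone_of_ray hK h)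
  push Not at hray
  obtain ⟨t₀, ht₀, hxt₀⟩ := hray
  set T : Set ℝ := {t | 0 ≤ t ∧ x + t • v ∈ K}
  have hT : IsClosed T := isClosed_Ici.inter (hK.preimage (by fun_prop))
  have hTbdd : BddAbove T := by
    refine ⟨t₀, fun t ⟨ht, hxt⟩ => not_lt.1 fun htt => hxt₀ ?_⟩
    have hseg : x + t₀ • v ∈ segment ℝ (x + (0 : ℝ) • v) (x + t • v) := by
      rw [← image_segment_add_smul, segment_eq_Icc ht]
      exact mem_image_of_mem _ ⟨ht₀, htt.le⟩
    exact hconv.segment_subset (by simpa using hx) hxt hseg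
  have hbT := hT.csSup_mem ⟨0, le_rfl, by simpa using hx⟩ hTbdd
  refine ⟨sSup T, hbT.1, ?_⟩
  rw [hK.frontier_eq]
  refine ⟨hbT.2, fun hint => ?_⟩
  have hev : ∀ᶠ s in 𝓝 (sSup T), x + s • v ∈ K :=
    ((by fun_prop : Continuous fun s : ℝ => x + s • v).tendsto _).eventually
      (isOpen_interior.mem_nhds hint) |>.mono fun _ h => interior_subset h
  obtain ⟨s, hs, hsK⟩ := hev.exists_gt
  exact (le_csSup hTbdd ⟨hbT.1.trans hs.le, hsK⟩).not_gt hs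

theorem Convex.exists_segment_frontier {K : Set E} (hconv : Convex ℝ K) (hK : IsClosed K)
    {x v : E} (hx : x ∈ K) (hv : v ∉ recessionCone K) (hv' : -v ∉ recessionCone K) :
    ∃ y z, y ∈ frontier K ∧ z ∈ frontier K ∧ x ∈ segment ℝ y z ∧
      segment ℝ y z ⊆ K ∩ range fun t : ℝ => x + t • v := by
  obtain ⟨a, ha, hy⟩ := hconv.exists_nonneg_add_smul_mem_frontier hK hx hv'
  obtain ⟨b, hb, hz⟩ := hconv.exists_nonneg_add_smul_mem_frontier hK hx hv
  have hseg : segment ℝ (x + a • -v) (x + b • v) = (fun t : ℝ => x + t • v) '' Icc (-a) b := by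
    rw [← segment_eq_Icc (by linarith), image_segment_add_smul, smul_neg, neg_smul]
  refine ⟨_, _, hy, hz, ?_, ?_⟩
  · rw [hseg]
    exact ⟨0, ⟨by linarith, hb⟩, by simp⟩
  · exact subset_inter (hconv.segment_subset (hK.frontier_subset hy) (hK.frontier_subset hz))
      (hseg ▸ image_subset_range _ _)

theorem IsClosed.exists_mem_notMem_neg_notMem {C : Set E} (hC : IsClosed C)
    (hpointed : ∀ v ∈ C, -v ∈ C → v = 0) {V : Submodule ℝ E} (hV : 1 < Module.rank ℝ V) :
    ∃ v ∈ V, v ∉ C ∧ -v ∉ C := by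
  by_contra! h
  set S : Set E := (↑) '' ({0}ᶜ : Set V)
  have hS : IsPreconnected S := ((isConnected_compl_singleton_of_one_lt_rank hV 0).image _
    continuous_subtype_val.continuousOn).isPreconnected
  have hmemS : ∀ w ∈ V, w ≠ 0 → w ∈ S := fun w hw hw0 =>
    ⟨⟨w, hw⟩, by simpa using hw0, rfl⟩
  obtain ⟨v, hvV, hv0⟩ := (Submodule.ne_bot_iff V).1 (by rintro rfl; simp at hV)
  have hcover : S ⊆ C ∪ -C := by
    rintro _ ⟨w, -, rfl⟩
    by_cases hw : (w : E) ∈ C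
    · exact Or.inl hw
    · exact Or.inr (h w w.2 hw)
  have hdisj : S ∩ (C ∩ -C) = ∅ := by
    refine eq_empty_of_forall_notMem ?_
    rintro _ ⟨⟨w, hw0, rfl⟩, hwC, hwC'⟩
    exact hw0 (Subtype.ext (hpointed _ hwC hwC'))
  have hv : v ∈ S := hmemS v hvV hv0
  have hv' : -v ∈ S := hmemS _ (V.neg_mem hvV) (neg_ne_zero.2 hv0)
  rcases isPreconnected_iff_subset_of_disjoint_closed.1 hS C (-C) hC hC.neg hcover hdisj
    with hSC | hSC
  · exact hv0 (hpointed v (hSC hv) (hSC hv'))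
  · exact hv0 (neg_eq_zero.1 (hpointed _ (hSC hv) (hSC hv')))

theorem finrank_sub_one_le_finrank_ker [FiniteDimensional ℝ E] (f : StrongDual ℝ E) :
    Module.finrank ℝ E - 1 ≤ Module.finrank ℝ (LinearMap.ker f.toLinearMap) := by
  have h1 := f.toLinearMap.finrank_range_add_finrank_ker
  have h2 := Submodule.finrank_le (LinearMap.range f.toLinearMap)
  rw [Module.finrank_self] at h2
  omega

theorem Convex.exists_mem_ray_or_mem_recessionCone {C : Set E} (hconv : Convex ℝ C)
    (hC : IsClosed C) (hne : C.Nonempty) {x v : E} {d : ℕ → E} (hd : Tendsto d atTop (𝓝 v))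
    (hmem : ∀ n, ∃ r : ℝ, 0 ≤ r ∧ x + r • d n ∈ C) :
    (∃ l : ℝ, 0 ≤ l ∧ x + l • v ∈ C) ∨ v ∈ recessionCone C := by
  choose r hr0 hrC using hmem
  by_cases htop : Tendsto r atTop atTop
  · right
    obtain ⟨y, hy⟩ := hne
    refine hconv.mem_recessionCone_of_ray hC (y := y) fun s hs => ?_
    -- `y + s • v` is the limit of the points at parameter `s / r n` on `[y, x + r n • d n]`
    have hlim : Tendsto (fun n => y + (s / r n) • (x - y) + s • d n) atTop
        (𝓝 (y + s • v)) := by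
      simpa using (tendsto_const_nhds.add
        ((tendsto_const_nhds.div_atTop htop).smul_const (x - y))).add (hd.const_smul s)
    refine hC.mem_of_tendsto hlim ?_
    filter_upwards [htop.eventually_ge_atTop s, htop.eventually_gt_atTop 0] with n hsn hrn
    convert hconv hy (hrC n) (sub_nonneg.2 ((div_le_one hrn).2 hsn))
      (div_nonneg hs hrn.le) (sub_add_cancel 1 _) using 1
    rw [smul_add, smul_smul, div_mul_cancel₀ _ hrn.ne']
    module
  · left
    obtain ⟨b, hb⟩ : ∃ b, ∃ᶠ n in atTop, r n ∈ Icc 0 b := by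
      rw [tendsto_atTop] at htop
      push Not at htop
      obtain ⟨b, hb⟩ := htop
      exact ⟨b, hb.mono fun n hn => ⟨hr0 n, hn.le⟩⟩
    obtain ⟨l, hl, φ, hφ, hlim⟩ :=
      tendsto_subseq_of_frequently_bounded (Metric.isBounded_Icc 0 b) hb
    rw [closure_Icc] at hl
    exact ⟨l, hl.1, hC.mem_of_tendsto
      (tendsto_const_nhds.add (hlim.smul (hd.comp hφ.tendsto_atTop)))
      (Eventually.of_forall fun n => hrC (φ n))⟩

theorem StrictConvex.eq_zero_of_forall_exists_add_smul_mem {C : Set E}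
    (hsc : StrictConvex ℝ C) (hconv : Convex ℝ C) (hC : IsClosed C) (hne : C.Nonempty)
    {f : StrongDual ℝ E} (hf : f ≠ 0) {x v : E} (hle : ∀ a ∈ C, f a ≤ f x)
    (hv : v ∈ recessionCone C) (hfv : f v = 0) {d : ℕ → E} (hd : Tendsto d atTop (𝓝 (-v)))
    (hmem : ∀ n, ∃ r : ℝ, 0 ≤ r ∧ x + r • d n ∈ C) : v = 0 := by
  rcases hconv.exists_mem_ray_or_mem_recessionCone hC hne hd hmem with ⟨l, -, hl⟩ | hv'
  · have := hsc.eq_of_apply_eq hf hle hl (hv _ hl 1 zero_le_one) (by simp [hfv]) (by simp [hfv])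
    simpa using this
  · have hC' : C ≠ univ := fun h =>
      (apply_lt_of_mem_interior hf hle (by simp [h] : x ∈ interior C)).false
    exact hsc.eq_zero_of_mem_recessionCone hC hne hC' hv (by simpa using hv')

theorem exists_direction_of_translate_rays {K Ω₁ : Set E} {x v : E} {f : StrongDual ℝ E}
    (hK : IsClosed K) (hpointed : ∀ w ∈ recessionCone K, -w ∈ recessionCone K → w = 0)
    (h1conv : Convex ℝ Ω₁) (h1ne : Ω₁.Nonempty) (hsc1 : StrictConvex ℝ (closure Ω₁))
    (hf : ∀ a ∈ Ω₁, f a < f x)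
    (hrays : ∀ w ∈ recessionCone K, w ≠ 0 → ∃ y, ∀ t : ℝ, 0 ≤ t → y + t • w ∈ Ω₁)
    (hv : f v = 0) (hv0 : v ≠ 0) :
    ∃ w, (∀ t : ℝ, x + t • w ∉ Ω₁) ∧ w ∉ recessionCone K ∧ -w ∉ recessionCone K := by
  by_contra! hH
  obtain ⟨x₁, hx₁⟩ := h1ne
  have hfu : f (x₁ - x) < 0 := by simpa using hf x₁ hx₁
  have hf0 : f ≠ 0 := by rintro rfl; simp at hfu
  wlog hvK : v ∈ recessionCone K generalizing v
  · refine this (by simpa using hv) (neg_ne_zero.2 hv0) (hH v (fun t ht => ?_) hvK)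
    exact (hf _ ht).ne (by simp [hv])
  have hslope : ∀ w ∈ recessionCone K, w ≠ 0 → f w ≤ 0 := fun w hw hw0 =>
    let ⟨y, hy⟩ := hrays w hw hw0
    apply_nonpos_of_forall_add_smul_le fun t ht => (hf _ (hy t ht)).le
  set w : ℕ → E := fun n => -v + (1 / ((n : ℝ) + 1)) • (x₁ - x)
  have hfw : ∀ n, f (w n) < 0 := fun n => by
    simpa [w, hv] using mul_neg_of_pos_of_neg (Nat.one_div_pos_of_nat (α := ℝ)) hfu
  have hw : Tendsto w atTop (𝓝 (-v)) := by
    simpa [w] using (tendsto_const_nhds (x := -v)).add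
      ((tendsto_one_div_add_atTop_nhds_zero_nat (𝕜 := ℝ)).smul_const (x₁ - x))
  have hnotMem : ∀ᶠ n in atTop, w n ∉ recessionCone K :=
    hw.eventually ((isClosed_recessionCone hK).isOpen_compl.mem_nhds
      fun h => hv0 (hpointed v hvK h))
  have hhit : ∀ᶠ n in atTop, ∃ r : ℝ, 0 ≤ r ∧ x + r • w n ∈ Ω₁ := by
    filter_upwards [hnotMem] with n hn
    by_contra! hmiss
    -- a point `x + t • w n` of `Ω₁` has `t > 0`, since `f (w n) < 0`
    have hline : ∀ t : ℝ, x + t • w n ∉ Ω₁ := fun t ht => by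
      have := hf _ ht
      simp only [map_add, map_smul, smul_eq_mul, add_lt_iff_neg_left] at this
      exact (hmiss t (by nlinarith [hfw n])).elim ht
    have := hslope _ (hH _ hline hn) (neg_ne_zero.2 fun h => by simpa [h] using hfw n)
    linarith [map_neg f (w n), hfw n]
  obtain ⟨N, hN⟩ := eventually_atTop.1 hhit
  obtain ⟨y, hy⟩ := hrays v hvK hv0
  refine hv0 (hsc1.eq_zero_of_forall_exists_add_smul_mem h1conv.closure isClosed_closure
    ⟨x₁, subset_closure hx₁⟩ hf0
    (fun a ha => closure_lt_subset_le f.continuous continuous_const (closure_mono hf ha))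
    (h1conv.closure.mem_recessionCone_of_ray isClosed_closure fun t ht => subset_closure (hy t ht))
    hv (hw.comp (tendsto_add_atTop_nat N)) fun n => ?_)
  exact (hN (n + N) (Nat.le_add_left N n)).imp fun r hr => ⟨hr.1, subset_closure hr.2⟩

end

theorem statement0_general {d : ℕ} (hd : 2 ≤ d)
    (Ω₀ Ω₁ : Set (EuclideanSpace ℝ (Fin d)))
    (h0open : IsOpen Ω₀) (h0conv : Convex ℝ Ω₀) (h0ne : Ω₀.Nonempty)
    (h0proper : Ω₀ ≠ Set.univ)
    (h1open : IsOpen Ω₁) (h1conv : Convex ℝ Ω₁) (h1ne : Ω₁.Nonempty)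
    (hsc0 : StrictConvex ℝ (closure Ω₀)) (hsc1 : StrictConvex ℝ (closure Ω₁))
    (hcone : d = 2 → ConeCondition Ω₀ Ω₁) :
    ∀ x ∈ closure Ω₀ \ Ω₁, ∃ y z : EuclideanSpace ℝ (Fin d),
      y ∈ frontier Ω₀ ∧ z ∈ frontier Ω₀ ∧ x ∈ segment ℝ y z ∧
      segment ℝ y z ⊆ closure Ω₀ \ Ω₁ := by
  rintro x ⟨hxK, hxΩ₁⟩
  obtain ⟨f, hf⟩ := geometric_hahn_banach_open_point h1conv h1open hxΩ₁
  have hpointed : ∀ v ∈ recessionCone (closure Ω₀), -v ∈ recessionCone (closure Ω₀) → v = 0 :=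
    fun v => hsc0.eq_zero_of_mem_recessionCone isClosed_closure h0ne.closure
      (h0open.closure_ne_univ h0conv h0ne h0proper)
  have hker := finrank_sub_one_le_finrank_ker f
  rw [finrank_euclideanSpace_fin] at hker
  obtain ⟨v, hmiss, hv, hv'⟩ : ∃ v, (∀ t : ℝ, x + t • v ∉ Ω₁) ∧
      v ∉ recessionCone (closure Ω₀) ∧ -v ∉ recessionCone (closure Ω₀) := by
    rcases hd.eq_or_lt with rfl | hd
    · obtain ⟨v, hv, hv0⟩ := (LinearMap.ker f.toLinearMap).ne_bot_iff.1
        fun h => by simp [h] at hker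
      obtain ⟨a, ha⟩ := h0ne
      exact exists_direction_of_translate_rays isClosed_closure hpointed h1conv h1ne hsc1 hf
        (fun w hw hw0 => hcone rfl a w hw0 (h0conv.recessionCone_closure_subset h0open hw a ha))
        hv hv0
    · have hrank : 1 < Module.rank ℝ (LinearMap.ker f.toLinearMap) := by
        rw [← Module.finrank_eq_rank]
        exact_mod_cast (by omega : 1 < _)
      obtain ⟨v, hv, hvC⟩ :=
        (isClosed_recessionCone isClosed_closure).exists_mem_notMem_neg_notMem hpointed hrank
      exact ⟨v, fun t ht => (hf _ ht).ne (by simp [show f v = 0 from hv]), hvC⟩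
  obtain ⟨y, z, hy, hz, hxyz, hsub⟩ :=
    h0conv.closure.exists_segment_frontier isClosed_closure hxK hv hv'
  refine ⟨y, z, frontier_closure_subset hy, frontier_closure_subset hz, hxyz,
    fun w hw => ⟨(hsub hw).1, ?_⟩⟩
  obtain ⟨t, rfl⟩ := (hsub hw).2
  exact hmiss t

/-- For every point `x` of `Ω = cl Ω₀ \ Ω₁` there is a segment contained in `Ω` passing
through `x` whose endpoints lie on `∂Ω₀`. -/
theorem statement0 {d : ℕ} (hd : 2 ≤ d)
    (Ω₀ Ω₁ : Set (EuclideanSpace ℝ (Fin d)))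
    (h0open : IsOpen Ω₀) (h0conv : Convex ℝ Ω₀) (h0ne : Ω₀.Nonempty)
    (h0proper : Ω₀ ≠ Set.univ)
    (h1open : IsOpen Ω₁) (h1conv : Convex ℝ Ω₁) (h1ne : Ω₁.Nonempty)
    (hcl : closure Ω₁ ⊆ Ω₀)
    (hsc0 : StrictConvex ℝ (closure Ω₀)) (hsc1 : StrictConvex ℝ (closure Ω₁))
    (hcone : d = 2 → ConeCondition Ω₀ Ω₁) :
    ∀ x ∈ closure Ω₀ \ Ω₁, ∃ y z : EuclideanSpace ℝ (Fin d),
      y ∈ frontier Ω₀ ∧ z ∈ frontier Ω₀ ∧ x ∈ segment ℝ y z ∧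
      segment ℝ y z ⊆ closure Ω₀ \ Ω₁ :=
  statement0_general hd Ω₀ Ω₁ h0open h0conv h0ne h0proper h1open h1conv h1ne hsc0 hsc1 hcone
end
end

section
/- Assume the open convex sets Ω₀ and Ω₁ satisfy the strict convexity condition; in the case d = 2 assume additionally the cone condition. Then for every x ∈ Ω there exists a function φ ∈ A(I) such that ⟨φ⟩_I = x. (In fact φ may be taken to be a two-valued step function whose values are the endpoints of a segment in Ω through x.) -/
noncomputable section

/-- The average `⟨φ⟩_{(a,b)}` of a function over the interval `(a,b)`. -/
noncomputable def intervalAvg {d : ℕ} (a b : ℝ) (φ : ℝ → EuclideanSpace ℝ (Fin d)) :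
    EuclideanSpace ℝ (Fin d) :=
  (b - a)⁻¹ • ∫ t in Set.Ioo a b, φ t
/-- The class `A`: summable functions on `(a,b)` with values in `∂Ω₀` all of whose
subinterval averages avoid `Ω₁`. -/
def MemClassA {d : ℕ} (Ω₀ Ω₁ : Set (EuclideanSpace ℝ (Fin d))) (a b : ℝ)
    (φ : ℝ → EuclideanSpace ℝ (Fin d)) : Prop :=
  MeasureTheory.IntegrableOn φ (Set.Ioo a b) ∧
  (∀ t ∈ Set.Ioo a b, φ t ∈ frontier Ω₀) ∧
  ∀ c e : ℝ, a ≤ c → c < e → e ≤ b → intervalAvg c e φ ∉ Ω₁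

/-!
It suffices to find a chord `[p, q]` of `cl Ω₀` through `x` with `p, q ∈ ∂Ω₀` that misses `Ω₁`:
the step function equal to `p` on the first `α`-th of `I` and to `q` on the rest (where
`x = α p + (1 - α) q`) has all its averages on `[p, q]`. If `x ∉ Ω₀`, take `p = q = x`.
Otherwise separate `x` from `Ω₁` by a functional `f`; every line through `x` in a direction of
`ker f` misses `Ω₁`, and the chord exists as soon as neither half of the line stays in `Ω₀`.
A closed, proper, strictly convex set contains no line. For `d ≥ 3`, `ker f \ {0}` is connected,
so some kernel direction `u` has neither `u` nor `-u` as a ray direction from `x`. For `d = 2`, if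
the kernel direction `v` spans a ray in `Ω₀`, the cone condition gives a ray in direction `v`
inside `Ω₁`, and we use `v + s n` with `f n = 1` and `s > 0` small instead: its forward ray leaves
`Ω₀` (otherwise the cone condition gives a ray in `Ω₁` on which `f` is unbounded), its backward
ray leaves `Ω₀` (a limit would give a line in `cl Ω₀`), and the line misses `Ω₁` (otherwise the
points where it meets `Ω₁` recede along `-v`, which would then be a recession direction of
`cl Ω₁`, giving a line in `cl Ω₁`).
-/

open Set Filter Topology MeasureTheory

theorem IsPreconnected.inter_frontier_nonempty {X : Type*} [TopologicalSpace X] {s t : Set X}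
    (hs : IsPreconnected s) (hst : (s ∩ t).Nonempty) (hst' : (s \ t).Nonempty) :
    (s ∩ frontier t).Nonempty := by
  by_contra h
  have hcover : s ⊆ interior t ∪ (closure t)ᶜ := fun z hz => by
    by_cases hzt : z ∈ interior t
    · exact Or.inl hzt
    · exact Or.inr fun hzc => h ⟨z, hz, hzc, hzt⟩
  obtain ⟨a, has, hat⟩ := hst
  obtain ⟨b, hbs, hbt⟩ := hst'
  have ha : a ∈ interior t := (hcover has).resolve_right (not_not.2 (subset_closure hat))
  have hb : b ∈ (closure t)ᶜ := (hcover hbs).resolve_left fun hb => hbt (interior_subset hb)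
  obtain ⟨z, -, hz, hz'⟩ := hs _ _ isOpen_interior isClosed_closure.isOpen_compl hcover
    ⟨a, has, ha⟩ ⟨b, hbs, hb⟩
  exact hz' (interior_subset_closure hz)

section Convex

variable {E : Type*} [NormedAddCommGroup E] [NormedSpace ℝ E] {C : Set E}

/-- Asymptotic directions of a closed convex set are recession directions. -/
theorem Convex.add_smul_mem_of_tendsto (hconv : Convex ℝ C) (hcl : IsClosed C) {y u : E}
    (hy : y ∈ C) {ι : Type*} {l : Filter ι} [l.NeBot] {z : ι → E} {r : ι → ℝ}
    (hz : ∀ᶠ i in l, z i ∈ C) (hr : Tendsto r l atTop)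
    (hu : Tendsto (fun i => (r i)⁻¹ • (z i - y)) l (𝓝 u)) {T : ℝ} (hT : 0 ≤ T) :
    y + T • u ∈ C := by
  refine hcl.mem_of_tendsto (tendsto_const_nhds.add (hu.const_smul T)) ?_
  filter_upwards [hz, hr.eventually_gt_atTop 0, hr.eventually_ge_atTop T] with i hzi hr0 hrT
  rw [smul_smul]
  exact hconv.add_smul_sub_mem hy hzi
    ⟨by positivity, by rw [mul_inv_le_iff₀ hr0]; linarith⟩

theorem Convex.add_smul_mem_of_ray (hconv : Convex ℝ C) (hcl : IsClosed C) {q v : E}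
    (hq : ∀ t : ℝ, 0 ≤ t → q + t • v ∈ C) {p : E} (hp : p ∈ C) {t : ℝ} (ht : 0 ≤ t) :
    p + t • v ∈ C := by
  have hu : Tendsto (fun s : ℝ => s⁻¹ • (q + s • v - p)) atTop (𝓝 v) := by
    have := ((tendsto_inv_atTop_zero (𝕜 := ℝ)).smul_const (q - p)).add_const v
    rw [zero_smul, zero_add] at this
    refine this.congr' ((eventually_ne_atTop 0).mono fun s hs => ?_)
    simp only [add_sub_right_comm, smul_add, smul_smul, inv_mul_cancel₀ hs, one_smul]
  exact hconv.add_smul_mem_of_tendsto hcl hp ((eventually_ge_atTop 0).mono hq) tendsto_id hu ht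

theorem StrictConvex.eq_univ_of_line (hsc : StrictConvex ℝ C) (hconv : Convex ℝ C)
    (hcl : IsClosed C) {p v : E} (hv : v ≠ 0) (hfwd : ∀ t : ℝ, 0 ≤ t → p + t • v ∈ C)
    (hbwd : ∀ t : ℝ, 0 ≤ t → p + t • -v ∈ C) : C = univ := by
  have hline : ∀ z ∈ C, ∀ t : ℝ, z + t • v ∈ C := fun z hz t => by
    rcases le_total 0 t with ht | ht
    · exact hconv.add_smul_mem_of_ray hcl hfwd hz ht
    · simpa using hconv.add_smul_mem_of_ray hcl hbwd hz (neg_nonneg.2 ht)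
  by_contra hne
  obtain ⟨z, hz⟩ := nonempty_frontier_iff.2 ⟨⟨p, by simpa using hfwd 0 le_rfl⟩, hne⟩
  have hzC : z ∈ C := hcl.frontier_subset hz
  have hmid : z + (2⁻¹ : ℝ) • v ∈ interior C := by
    convert hsc hzC (hline z hzC 1) (by simpa using hv) (by norm_num : (0 : ℝ) < 2⁻¹)
      (by norm_num : (0 : ℝ) < 2⁻¹) (by norm_num) using 1
    module
  -- `C` is invariant under translation along `v`, hence so is its interior
  refine hz.2 (mem_interior_iff_mem_nhds.2 (mem_of_superset
    ((continuous_add_const _).continuousAt.preimage_mem_nhds (isOpen_interior.mem_nhds hmid))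
    fun w hw => ?_))
  simpa using hline _ (interior_subset hw) (-2⁻¹)

theorem IsOpen.closure_ne_univ_of_convex {Ω : Set E} (hopen : IsOpen Ω) (hconv : Convex ℝ Ω)
    (hne : Ω.Nonempty) (hproper : Ω ≠ univ) : closure Ω ≠ univ := fun h => hproper <| by
  have := hconv.interior_closure_eq_interior_of_nonempty_interior (hopen.interior_eq.symm ▸ hne)
  rwa [h, interior_univ, hopen.interior_eq, eq_comm] at this

theorem StrictConvex.eq_of_apply_eq_s1 {f : E →L[ℝ] ℝ} (hf : f ≠ 0) {c : ℝ}
    (hsc : StrictConvex ℝ C) (hC : ∀ z ∈ C, f z ≤ c) {z₁ z₂ : E} (h₁ : z₁ ∈ C) (h₂ : z₂ ∈ C)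
    (hf₁ : f z₁ = c) (hf₂ : f z₂ = c) : z₁ = z₂ := by
  by_contra hne
  have hmid := hsc h₁ h₂ hne (by norm_num : (0 : ℝ) < 2⁻¹) (by norm_num : (0 : ℝ) < 2⁻¹)
    (by norm_num)
  have hc : c ∈ f '' interior C := ⟨_, hmid, by simp [hf₁, hf₂]; ring⟩
  obtain ⟨_, hcb, z, hz, rfl⟩ :=
    Filter.Eventually.exists_gt ((f.isOpenMap_of_ne_zero hf _ isOpen_interior).mem_nhds hc)
  exact (hC z (interior_subset hz)).not_gt hcb

theorem StrictConvex.notMem_of_ray (hsc : StrictConvex ℝ C) (hconv : Convex ℝ C)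
    (hcl : IsClosed C) {f : E →L[ℝ] ℝ} (hf : f ≠ 0) {x v y : E} (hC : ∀ z ∈ C, f z ≤ f x)
    (hv : f v = 0) (hv0 : v ≠ 0) (hy : ∀ t : ℝ, 0 ≤ t → y + t • v ∈ C) : x ∉ C := by
  intro hx
  have := hsc.eq_of_apply_eq_s1 hf hC hx (hconv.add_smul_mem_of_ray hcl hy hx zero_le_one) rfl
    (by simp [hv])
  exact hv0 (by simpa using this)

theorem exists_add_smul_mem_frontier {s : Set E} {x u : E} (hx : x ∈ s)
    (h : ¬ ∀ t : ℝ, 0 ≤ t → x + t • u ∈ s) : ∃ t : ℝ, 0 ≤ t ∧ x + t • u ∈ frontier s := by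
  obtain ⟨t₁, ht₁, hout⟩ := not_forall₂.1 h
  have hray : IsPreconnected ((fun t : ℝ => x + t • u) '' Ici 0) :=
    isPreconnected_Ici.image _ (by fun_prop)
  obtain ⟨_, ⟨t, ht, rfl⟩, hfr⟩ := hray.inter_frontier_nonempty
    ⟨x, ⟨0, self_mem_Ici, by simp⟩, hx⟩ ⟨_, ⟨t₁, ht₁, rfl⟩, hout⟩
  exact ⟨t, ht, hfr⟩

theorem exists_chord_of_line {Ω₀ Ω₁ : Set E} {x u : E} (hx : x ∈ Ω₀)
    (hfwd : ¬ ∀ t : ℝ, 0 ≤ t → x + t • u ∈ Ω₀) (hbwd : ¬ ∀ t : ℝ, 0 ≤ t → x + t • -u ∈ Ω₀)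
    (hmiss : ∀ t : ℝ, x + t • u ∉ Ω₁) :
    ∃ p ∈ frontier Ω₀, ∃ q ∈ frontier Ω₀, x ∈ segment ℝ p q ∧ ∀ z ∈ segment ℝ p q, z ∉ Ω₁ := by
  obtain ⟨α, hα, hp⟩ := exists_add_smul_mem_frontier hx hbwd
  obtain ⟨β, hβ, hq⟩ := exists_add_smul_mem_frontier hx hfwd
  have hg : ∀ t : ℝ, AffineMap.lineMap x (x + u) t = x + t • u := fun t => by
    rw [AffineMap.lineMap_apply_module', add_sub_cancel_left, add_comm]
  have hseg : segment ℝ (x + α • -u) (x + β • u) = AffineMap.lineMap x (x + u) '' Icc (-α) β := by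
    rw [← segment_eq_Icc (by linarith), image_segment, hg, hg, neg_smul, smul_neg]
  refine ⟨_, hp, _, hq, ?_, ?_⟩ <;> rw [hseg]
  · exact ⟨0, ⟨by linarith, hβ⟩, by simp [hg]⟩
  · rintro _ ⟨t, -, rfl⟩
    rw [hg]
    exact hmiss t

theorem exists_mem_submodule_not_ray {C : Set E} (hsc : StrictConvex ℝ C) (hconv : Convex ℝ C)
    (hcl : IsClosed C) (hne : C ≠ univ) (x : E) {V : Submodule ℝ E}
    (hV : 1 < Module.rank ℝ V) :
    ∃ u ∈ V, (¬ ∀ t : ℝ, 0 ≤ t → x + t • u ∈ C) ∧ ¬ ∀ t : ℝ, 0 ≤ t → x + t • -u ∈ C := by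
  by_contra! h
  let T : Set V := {u | ∀ t : ℝ, 0 ≤ t → x + t • (u : E) ∈ C}
  have hT : IsClosed T := by
    simp only [T, ofPred_forall]
    exact isClosed_iInter fun t => isClosed_iInter fun _ => hcl.preimage (by fun_prop)
  have hcover : ({0}ᶜ : Set V) ⊆ T ∪ Neg.neg ⁻¹' T := fun u _ => by
    by_cases hu : u ∈ T
    · exact Or.inl hu
    · exact Or.inr (h u u.2 (by simpa [T] using hu))
  have hconn := isConnected_compl_singleton_of_one_lt_rank hV 0
  have hnotin : ∀ w ∈ ({0}ᶜ : Set V), w ∉ T := fun w hw hwT => by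
    obtain ⟨w', hw', hwT', hwT''⟩ := isPreconnected_closed_iff.1 hconn.isPreconnected _ _ hT
      (hT.preimage continuous_neg) hcover ⟨w, hw, hwT⟩ ⟨-w, neg_ne_zero.2 hw, by simpa using hwT⟩
    exact hne (hsc.eq_univ_of_line hconv hcl (by simpa using hw') hwT' hwT'')
  obtain ⟨u, hu⟩ := hconn.nonempty
  exact (hcover hu).elim (hnotin u hu) (hnotin (-u) (neg_ne_zero.2 hu))

theorem add_smul_notMem_of_apply_eq_zero {S : Set E} {f : E →L[ℝ] ℝ} {x : E}
    (hS : ∀ z ∈ S, f z < f x) {u : E} (hu : f u = 0) (t : ℝ) : x + t • u ∉ S := fun h => by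
  simpa [hu] using hS _ h

theorem not_ray_of_apply_pos {S : Set E} {f : E →L[ℝ] ℝ} {c : ℝ} (hS : ∀ z ∈ S, f z < c)
    {w : E} (hw : 0 < f w) (y : E) : ¬ ∀ t : ℝ, 0 ≤ t → y + t • w ∈ S := by
  intro h
  have hmem := hS _ (h (max 0 ((c - f y) / f w)) (le_max_left _ _))
  have hle := (div_le_iff₀ hw).1 (le_max_right 0 ((c - f y) / f w))
  simp only [map_add, map_smul, smul_eq_mul] at hmem
  linarith

theorem eventually_not_ray_neg_tilt {C : Set E} (hsc : StrictConvex ℝ C) (hconv : Convex ℝ C)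
    (hcl : IsClosed C) (hne : C ≠ univ) {x v : E} (hv : v ≠ 0)
    (hray : ∀ t : ℝ, 0 ≤ t → x + t • v ∈ C) (n : E) :
    ∀ᶠ s in 𝓝 (0 : ℝ), ¬ ∀ t : ℝ, 0 ≤ t → x + t • -(v + s • n) ∈ C := by
  by_contra h
  simp only [not_eventually, not_not] at h
  refine hne (hsc.eq_univ_of_line hconv hcl hv hray fun t ht =>
    hcl.mem_of_frequently_of_tendsto (h.mono fun s hs => hs t ht) ?_)
  simpa using ((by fun_prop : Continuous fun s : ℝ => x + t • -(v + s • n)).tendsto 0)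

theorem eventually_tilted_line_disjoint {Ω₁ : Set E} (hconv : Convex ℝ (closure Ω₁))
    (hsc : StrictConvex ℝ (closure Ω₁)) {f : E →L[ℝ] ℝ} {x v n y : E}
    (hf : ∀ z ∈ Ω₁, f z < f x) (hxC : x ∉ closure Ω₁) (hv : f v = 0) (hv0 : v ≠ 0)
    (hn : f n = 1) (hy : ∀ t : ℝ, 0 ≤ t → y + t • v ∈ closure Ω₁) :
    ∀ᶠ s in 𝓝[>] (0 : ℝ), ∀ t : ℝ, x + t • (v + s • n) ∉ Ω₁ := by
  have hn0 : 0 < ‖n‖ := norm_pos_iff.2 fun h => by simp [h] at hn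
  obtain ⟨ε, hε, hball⟩ := Metric.isOpen_iff.1 isClosed_closure.isOpen_compl x hxC
  by_contra h
  simp only [not_eventually, not_forall, not_not] at h
  choose! τ hτ using fun (s : ℝ) (hs : ∃ t : ℝ, x + t • (v + s • n) ∈ Ω₁) => hs
  let l := 𝓝[>] (0 : ℝ) ⊓ 𝓟 {s | ∃ t : ℝ, x + t • (v + s • n) ∈ Ω₁}
  have : l.NeBot := frequently_iff_neBot.1 h
  have hl : ∀ᶠ s in l, 0 < s ∧ x + τ s • (v + s • n) ∈ Ω₁ :=
    eventually_inf_principal.2 (eventually_mem_nhdsWithin.mono fun s hs hS => ⟨hs, hτ s hS⟩)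
  -- sliding a witness along `v` lands at distance `≥ ε` from `x` in direction `n`
  have hfar : ∀ᶠ s in l, ε / ‖n‖ * s⁻¹ ≤ -τ s := hl.mono fun s ⟨hs, hz⟩ => by
    have hτs : τ s * s < 0 := by simpa [hv, hn] using hf _ hz
    have hτ0 : τ s < 0 := neg_of_mul_neg_left hτs hs.le
    have hshift : x + (τ s * s) • n ∈ closure Ω₁ := by
      convert hconv.add_smul_mem_of_ray isClosed_closure hy (subset_closure hz)
        (neg_nonneg.2 hτ0.le) using 1
      module
    have hdist : ε ≤ ‖(τ s * s) • n‖ := by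
      simpa using not_lt.1 fun hlt => hball (a := x + (τ s * s) • n) (by simpa using hlt) hshift
    rw [norm_smul, Real.norm_of_nonpos hτs.le] at hdist
    calc ε / ‖n‖ * s⁻¹ = ε / (s * ‖n‖) := by field_simp
      _ ≤ -τ s := (div_le_iff₀ (by positivity)).2 (by nlinarith)
  have hr : Tendsto (fun s => -τ s) l atTop := tendsto_atTop_mono' l hfar
    ((tendsto_inv_nhdsGT_zero.const_mul_atTop (by positivity)).mono_left inf_le_left)
  have hdir : Tendsto (fun s => (-τ s)⁻¹ • (x + τ s • (v + s • n) - y)) l (𝓝 (-v)) := by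
    have hw : Tendsto (fun s : ℝ => v + s • n) l (𝓝 v) := by
      simpa using ((by fun_prop : Continuous fun s : ℝ => v + s • n).tendsto 0).mono_left
        (inf_le_left.trans nhdsWithin_le_nhds)
    have := ((tendsto_inv_atTop_zero.comp hr).smul_const (x - y)).sub hw
    rw [zero_smul, zero_sub] at this
    refine this.congr' ((hr.eventually_gt_atTop 0).mono fun s hs => ?_)
    simp only [Function.comp_apply]
    rw [show x + τ s • (v + s • n) - y = (x - y) - (-τ s) • (v + s • n) by module,
      smul_sub _ (x - y), smul_smul, inv_mul_cancel₀ hs.ne', one_smul]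
  have hneg : ∀ T : ℝ, 0 ≤ T → y + T • -v ∈ closure Ω₁ := fun T hT =>
    hconv.add_smul_mem_of_tendsto isClosed_closure (by simpa using hy 0 le_rfl)
      (hl.mono fun s hs => subset_closure hs.2) hr hdir hT
  exact hxC (hsc.eq_univ_of_line hconv isClosed_closure hv0 hy hneg ▸ mem_univ x)

theorem exists_direction_of_ray {Ω₀ Ω₁ : Set E} (h0conv : Convex ℝ Ω₀)
    (hsc0 : StrictConvex ℝ (closure Ω₀)) (hne0 : closure Ω₀ ≠ univ) (h1conv : Convex ℝ Ω₁)
    (hsc1 : StrictConvex ℝ (closure Ω₁)) {f : E →L[ℝ] ℝ} {x v n : E}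
    (hf : ∀ z ∈ Ω₁, f z < f x) (hv : f v = 0) (hv0 : v ≠ 0) (hn : f n = 1)
    (hray : ∀ t : ℝ, 0 ≤ t → x + t • v ∈ Ω₀)
    (hcone : ∀ w : E, w ≠ 0 → (∀ t : ℝ, 0 ≤ t → x + t • w ∈ Ω₀) →
      ∃ y : E, ∀ t : ℝ, 0 ≤ t → y + t • w ∈ Ω₁) :
    ∃ u : E, (¬ ∀ t : ℝ, 0 ≤ t → x + t • u ∈ Ω₀) ∧ (¬ ∀ t : ℝ, 0 ≤ t → x + t • -u ∈ Ω₀) ∧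
      ∀ t : ℝ, x + t • u ∉ Ω₁ := by
  obtain ⟨y, hy⟩ := hcone v hv0 hray
  have hbwd := eventually_not_ray_neg_tilt hsc0 h0conv.closure isClosed_closure hne0 hv0
    (fun t ht => subset_closure (hray t ht)) n
  have hy' : ∀ t : ℝ, 0 ≤ t → y + t • v ∈ closure Ω₁ := fun t ht => subset_closure (hy t ht)
  have hCf : ∀ z ∈ closure Ω₁, f z ≤ f x := fun z hz =>
    closure_minimal (fun z hz => (hf z hz).le : Ω₁ ⊆ {z | f z ≤ f x})
      (isClosed_le f.continuous continuous_const) hz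
  have hf0 : f ≠ 0 := by rintro rfl; simp at hn
  have hxC := hsc1.notMem_of_ray h1conv.closure isClosed_closure hf0 hCf hv hv0 hy'
  have hmiss := eventually_tilted_line_disjoint h1conv.closure hsc1 hf hxC hv hv0 hn hy'
  obtain ⟨s, hs, hbwd, hmiss⟩ :=
    ((eventually_mem_nhdsWithin (a := (0 : ℝ)) (s := Ioi 0)).and
      ((hbwd.filter_mono nhdsWithin_le_nhds).and hmiss)).exists
  have hfw : 0 < f (v + s • n) := by simpa [hv, hn] using hs
  refine ⟨v + s • n, fun h => ?_, fun h => hbwd fun t ht => subset_closure (h t ht), hmiss⟩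
  obtain ⟨z, hz⟩ := hcone _ (fun h0 => by simp [h0] at hfw) h
  exact not_ray_of_apply_pos hf hfw z hz

theorem exists_direction_of_cone {Ω₀ Ω₁ : Set E} (h0conv : Convex ℝ Ω₀)
    (hsc0 : StrictConvex ℝ (closure Ω₀)) (hne0 : closure Ω₀ ≠ univ) (h1conv : Convex ℝ Ω₁)
    (hsc1 : StrictConvex ℝ (closure Ω₁)) {f : E →L[ℝ] ℝ} (hf0 : f ≠ 0) {x v : E}
    (hf : ∀ z ∈ Ω₁, f z < f x) (hv : f v = 0) (hv0 : v ≠ 0)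
    (hcone : ∀ w : E, w ≠ 0 → (∀ t : ℝ, 0 ≤ t → x + t • w ∈ Ω₀) →
      ∃ y : E, ∀ t : ℝ, 0 ≤ t → y + t • w ∈ Ω₁) :
    ∃ u : E, (¬ ∀ t : ℝ, 0 ≤ t → x + t • u ∈ Ω₀) ∧ (¬ ∀ t : ℝ, 0 ≤ t → x + t • -u ∈ Ω₀) ∧
      ∀ t : ℝ, x + t • u ∉ Ω₁ := by
  obtain ⟨w, hw⟩ := DFunLike.ne_iff.1 hf0
  have hn : f ((f w)⁻¹ • w) = 1 := by simpa using inv_mul_cancel₀ hw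
  by_cases hfwd : ∀ t : ℝ, 0 ≤ t → x + t • v ∈ Ω₀
  · exact exists_direction_of_ray h0conv hsc0 hne0 h1conv hsc1 hf hv hv0 hn hfwd hcone
  by_cases hbwd : ∀ t : ℝ, 0 ≤ t → x + t • -v ∈ Ω₀
  · exact exists_direction_of_ray h0conv hsc0 hne0 h1conv hsc1 hf (by simp [hv])
      (neg_ne_zero.2 hv0) hn hbwd hcone
  exact ⟨v, hfwd, hbwd, add_smul_notMem_of_apply_eq_zero hf hv⟩

end Convex

theorem exists_chord {d : ℕ} (hd : 2 ≤ d) {Ω₀ Ω₁ : Set (EuclideanSpace ℝ (Fin d))}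
    (h0open : IsOpen Ω₀) (h0conv : Convex ℝ Ω₀) (h0ne : Ω₀.Nonempty) (h0proper : Ω₀ ≠ univ)
    (h1open : IsOpen Ω₁) (h1conv : Convex ℝ Ω₁) (h1ne : Ω₁.Nonempty)
    (hsc0 : StrictConvex ℝ (closure Ω₀)) (hsc1 : StrictConvex ℝ (closure Ω₁))
    (hcone : d = 2 → ConeCondition Ω₀ Ω₁) {x : EuclideanSpace ℝ (Fin d)}
    (hx : x ∈ closure Ω₀ \ Ω₁) :
    ∃ p ∈ frontier Ω₀, ∃ q ∈ frontier Ω₀, x ∈ segment ℝ p q ∧ ∀ z ∈ segment ℝ p q, z ∉ Ω₁ := by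
  by_cases hx0 : x ∉ Ω₀
  · have hxfr : x ∈ frontier Ω₀ := ⟨hx.1, fun h => hx0 (interior_subset h)⟩
    exact ⟨x, hxfr, x, hxfr, left_mem_segment ℝ x x, by simpa using hx.2⟩
  rw [not_not] at hx0
  obtain ⟨f, hf⟩ := geometric_hahn_banach_open_point h1conv h1open hx.2
  have hf0 : f ≠ 0 := by
    rintro rfl
    obtain ⟨w, hw⟩ := h1ne
    simpa using hf w hw
  have hne0 := h0open.closure_ne_univ_of_convex h0conv h0ne h0proper
  set K := LinearMap.ker (f : EuclideanSpace ℝ (Fin d) →ₗ[ℝ] ℝ)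
  have hK : Module.finrank ℝ K + 1 = d := by
    rw [Module.Dual.finrank_ker_add_one_of_ne_zero (by exact_mod_cast hf0),
      finrank_euclideanSpace_fin]
  suffices ∃ u, (¬ ∀ t : ℝ, 0 ≤ t → x + t • u ∈ Ω₀) ∧ (¬ ∀ t : ℝ, 0 ≤ t → x + t • -u ∈ Ω₀) ∧
      ∀ t : ℝ, x + t • u ∉ Ω₁ by
    obtain ⟨u, hfwd, hbwd, hmiss⟩ := this
    exact exists_chord_of_line hx0 hfwd hbwd hmiss
  by_cases hd2 : d = 2
  · obtain ⟨v, hv, hv0⟩ := Submodule.exists_mem_ne_zero_of_ne_bot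
      (Submodule.one_le_finrank_iff.1 (by omega) : K ≠ ⊥)
    exact exists_direction_of_cone h0conv hsc0 hne0 h1conv hsc1 hf0 hf (LinearMap.mem_ker.1 hv)
      hv0 (hcone hd2 x)
  · have hrank : 1 < Module.rank ℝ K := by
      rw [← Module.finrank_eq_rank]
      exact_mod_cast (by omega : 1 < Module.finrank ℝ K)
    obtain ⟨u, hu, hfwd, hbwd⟩ :=
      exists_mem_submodule_not_ray hsc0 h0conv.closure isClosed_closure hne0 x hrank
    exact ⟨u, fun h => hfwd fun t ht => subset_closure (h t ht),
      fun h => hbwd fun t ht => subset_closure (h t ht),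
      add_smul_notMem_of_apply_eq_zero hf (LinearMap.mem_ker.1 hu)⟩

theorem integrableOn_step {E : Type*} [NormedAddCommGroup E] (p q : E) (m : ℝ) {s : Set ℝ}
    (hs : volume s ≠ ⊤) :
    IntegrableOn (fun t => if t < m then p else q) s :=
  Measure.integrableOn_of_bounded hs
    (stronglyMeasurable_const.ite measurableSet_Iio stronglyMeasurable_const).aestronglyMeasurable
    (M := max ‖p‖ ‖q‖) (Eventually.of_forall fun t => by split_ifs <;> simp)

theorem setIntegral_Ioo_step {E : Type*} [NormedAddCommGroup E] [NormedSpace ℝ E]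
    [CompleteSpace E] (p q : E) {a m b : ℝ} (ham : a ≤ m) (hmb : m ≤ b) :
    ∫ t in Ioo a b, (if t < m then p else q) = (m - a) • p + (b - m) • q := by
  rw [← integral_Ioc_eq_integral_Ioo, ← Ioc_union_Ioc_eq_Ioc ham hmb,
    setIntegral_union (Ioc_disjoint_Ioc_of_le le_rfl) measurableSet_Ioc
      (integrableOn_step p q m measure_Ioc_lt_top.ne)
      (integrableOn_step p q m measure_Ioc_lt_top.ne),
    integral_Ioc_eq_integral_Ioo,
    setIntegral_congr_fun measurableSet_Ioo (g := fun _ => p) fun t ht => if_pos ht.2,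
    setIntegral_congr_fun measurableSet_Ioc (g := fun _ => q)
      fun t ht => if_neg (not_lt.2 ht.1.le),
    setIntegral_const, setIntegral_const, Real.volume_real_Ioo_of_le ham,
    Real.volume_real_Ioc_of_le hmb]

theorem intervalAvg_eq_setAverage {d : ℕ} (φ : ℝ → EuclideanSpace ℝ (Fin d)) {c e : ℝ}
    (hce : c ≤ e) : intervalAvg c e φ = ⨍ t in Ioo c e, φ t := by
  rw [intervalAvg, setAverage_eq, Real.volume_real_Ioo_of_le hce]

theorem statement1_general {d : ℕ} (hd : 2 ≤ d)
    (Ω₀ Ω₁ : Set (EuclideanSpace ℝ (Fin d)))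
    (h0open : IsOpen Ω₀) (h0conv : Convex ℝ Ω₀) (h0ne : Ω₀.Nonempty)
    (h0proper : Ω₀ ≠ Set.univ)
    (h1open : IsOpen Ω₁) (h1conv : Convex ℝ Ω₁) (h1ne : Ω₁.Nonempty)
    (hsc0 : StrictConvex ℝ (closure Ω₀)) (hsc1 : StrictConvex ℝ (closure Ω₁))
    (hcone : d = 2 → ConeCondition Ω₀ Ω₁)
    (a b : ℝ) (hab : a < b) :
    ∀ x ∈ closure Ω₀ \ Ω₁, ∃ φ : ℝ → EuclideanSpace ℝ (Fin d),
      MemClassA Ω₀ Ω₁ a b φ ∧ intervalAvg a b φ = x := by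
  intro x hx
  obtain ⟨p, hp, q, hq, ⟨α, β, hα, hβ, hαβ, rfl⟩, hseg⟩ :=
    exists_chord hd h0open h0conv h0ne h0proper h1open h1conv h1ne hsc0 hsc1 hcone hx
  set m := a + α * (b - a)
  have hm : a ≤ m ∧ m ≤ b := ⟨by nlinarith, by nlinarith⟩
  refine ⟨fun t => if t < m then p else q, ⟨integrableOn_step p q m measure_Ioo_lt_top.ne,
    fun t _ => by dsimp only; split_ifs <;> assumption, fun c e _ hce _ => hseg _ ?_⟩, ?_⟩
  · rw [intervalAvg_eq_setAverage _ hce.le]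
    have hclosed : IsClosed (segment ℝ p q) := by
      rw [← convexHull_pair]
      exact (toFinite _).isClosed_convexHull ℝ
    refine (convex_segment p q).set_average_mem hclosed (by simp [hce]) measure_Ioo_lt_top.ne
      (Eventually.of_forall fun t => ?_) (integrableOn_step p q m measure_Ioo_lt_top.ne)
    split_ifs
    exacts [left_mem_segment ℝ p q, right_mem_segment ℝ p q]
  · have hba : b - a ≠ 0 := by linarith
    rw [intervalAvg, setIntegral_Ioo_step p q hm.1 hm.2,
      show m - a = (b - a) * α by simp only [m]; ring,
      show b - m = (b - a) * β by simp only [m]; linear_combination (a - b) * hαβ,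
      smul_add, smul_smul, smul_smul, inv_mul_cancel_left₀ hba, inv_mul_cancel_left₀ hba]

/-- For every `x ∈ Ω = cl Ω₀ \ Ω₁` and every bounded interval `I = (a,b)` there exists
`φ ∈ A(I)` with `⟨φ⟩_I = x`. -/
theorem statement1 {d : ℕ} (hd : 2 ≤ d)
    (Ω₀ Ω₁ : Set (EuclideanSpace ℝ (Fin d)))
    (h0open : IsOpen Ω₀) (h0conv : Convex ℝ Ω₀) (h0ne : Ω₀.Nonempty)
    (h0proper : Ω₀ ≠ Set.univ)
    (h1open : IsOpen Ω₁) (h1conv : Convex ℝ Ω₁) (h1ne : Ω₁.Nonempty)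
    (hcl : closure Ω₁ ⊆ Ω₀)
    (hsc0 : StrictConvex ℝ (closure Ω₀)) (hsc1 : StrictConvex ℝ (closure Ω₁))
    (hcone : d = 2 → ConeCondition Ω₀ Ω₁)
    (a b : ℝ) (hab : a < b) :
    ∀ x ∈ closure Ω₀ \ Ω₁, ∃ φ : ℝ → EuclideanSpace ℝ (Fin d),
      MemClassA Ω₀ Ω₁ a b φ ∧ intervalAvg a b φ = x :=
  statement1_general hd Ω₀ Ω₁ h0open h0conv h0ne h0proper h1open h1conv h1ne hsc0 hsc1 hcone a b hab
end
end

section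
/- Let Ω satisfy the strict convexity condition. Let x ∈ ∂Ω₁ ∩ Ω, let ℓ ⊆ Ω be a transversal segment with endpoint x, and let s ⊆ Ω be another segment with endpoint x. Then the convex hull of ℓ ∪ s is contained in Ω; moreover, this convex hull, except for the point x itself, lies inside Ω* = cl(Ω₀) \ cl(Ω₁). -/
/-!
A line through `x` meeting the open convex set `Ω₁` must do so beyond `x`, on the side away from
`p`: on `[x, p]` it would contradict `[x, p] ∩ Ω₁ = ∅`, and past `p` it would put `p` in the
interior of `Ω₁`, since `x ∈ cl Ω₁`. So some `y ∈ Ω₁` has `x` between `y` and `p`, and by Pasch's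
axiom the segment from `y` to any point `w` of the triangle `x p q` crosses `[x, q]`; were `w` in
`Ω₁`, this crossing point would be in `Ω₁` by convexity. Finally, if some `w ≠ x` of the triangle
lay in `cl Ω₁`, strict convexity would put the open segment `(x, w)`, which lies in the triangle,
inside `int (cl Ω₁) = Ω₁`.
-/

open Set

section Affine

variable {E : Type*} [AddCommGroup E] [Module ℝ E]

lemma wbtw_add_smul_sub_of_nonpos (x p : E) {t : ℝ} (ht : t ≤ 0) :
    Wbtw ℝ (x + t • (p - x)) x p := by
  simpa [vadd_eq_add, add_comm] using
    wbtw_smul_vadd_smul_vadd_of_nonpos_of_nonneg (R := ℝ) x (p - x) ht zero_le_one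

lemma not_disjoint_segment_of_wbtw_of_mem_convexHull {x y p q w : E} (hyxp : Wbtw ℝ y x p)
    (hw : w ∈ convexHull ℝ {x, p, q}) : ¬Disjoint (segment ℝ y w) (segment ℝ x q) := by
  rw [pair_comm p q, insert_comm x q, convexHull_insert (insert_nonempty _ _),
    convexHull_pair] at hw
  obtain ⟨q', hq', u, hu, hw⟩ := mem_convexJoin.1 hw
  rw [mem_singleton_iff.1 hq'] at hw
  have hyxu : x ∈ segment ℝ y u :=
    mem_segment_iff_wbtw.2 (hyxp.trans_right_left (mem_segment_iff_wbtw.1 hu))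
  -- Pasch's axiom in the triangle `y u q`, as the degenerate tetrahedron `y u x q`.
  simpa [convexHull_pair, segment_symm ℝ q x] using
    not_disjoint_segment_convexHull_triple hyxu (left_mem_segment ℝ y x)
      (segment_symm ℝ q u ▸ hw) (p := x) (q := q)

lemma disjoint_convexHull_of_wbtw {C : Set E} (hC : Convex ℝ C) {x y p q : E} (hy : y ∈ C)
    (hyxp : Wbtw ℝ y x p) (hxq : Disjoint (segment ℝ x q) C) :
    Disjoint (convexHull ℝ {x, p, q}) C := by
  refine disjoint_left.2 fun w hw hwC => ?_
  obtain ⟨z, hzyw, hzxq⟩ :=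
    not_disjoint_iff.1 (not_disjoint_segment_of_wbtw_of_mem_convexHull hyxp hw)
  exact disjoint_left.1 hxq hzxq (hC.segment_subset hy hwC hzyw)

end Affine

section Topological

variable {E : Type*} [AddCommGroup E] [Module ℝ E] [TopologicalSpace E]
  [IsTopologicalAddGroup E] [ContinuousSMul ℝ E] {C : Set E}

lemma neg_of_add_smul_sub_mem (hC : Convex ℝ C) (hCo : IsOpen C) {x p : E} {t : ℝ}
    (hx : x ∈ closure C) (hxp : Disjoint (segment ℝ x p) C) (ht : x + t • (p - x) ∈ C) :
    t < 0 := by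
  by_contra! h0
  rcases le_or_gt t 1 with h1 | h1
  · exact disjoint_left.1 hxp (segment_eq_image' ℝ x p ▸ mem_image_of_mem _ ⟨h0, h1⟩) ht
  · have hp : x + t⁻¹ • (t • (p - x)) ∈ interior C :=
      hC.add_smul_mem_interior' hx (hCo.interior_eq.symm ▸ ht)
        ⟨by positivity, inv_le_one_of_one_le₀ h1.le⟩
    rw [inv_smul_smul₀ (by positivity), add_sub_cancel, hCo.interior_eq] at hp
    exact disjoint_left.1 hxp (right_mem_segment ℝ x p) hp

lemma openSegment_subset_of_strictConvex_closure (hCo : IsOpen C) (hC : Convex ℝ C)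
    (hsc : StrictConvex ℝ (closure C)) (hne : C.Nonempty) {x w : E} (hx : x ∈ closure C)
    (hw : w ∈ closure C) (hxw : x ≠ w) : openSegment ℝ x w ⊆ C := by
  have := hsc.openSegment_subset hx hw hxw
  rwa [hC.interior_closure_eq_interior_of_nonempty_interior (hCo.interior_eq.symm ▸ hne),
    hCo.interior_eq] at this

end Topological

theorem statement9_general {d : ℕ}
    (Ω₀ Ω₁ : Set (EuclideanSpace ℝ (Fin d)))
    (h0conv : Convex ℝ Ω₀)
    (h1open : IsOpen Ω₁) (h1conv : Convex ℝ Ω₁)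
    (hsc1 : StrictConvex ℝ (closure Ω₁))
    (x p q : EuclideanSpace ℝ (Fin d))
    (hx : x ∈ frontier Ω₁)
    (hp : segment ℝ x p ⊆ closure Ω₀ \ Ω₁)
    (hq : segment ℝ x q ⊆ closure Ω₀ \ Ω₁)
    (htrans : ∃ t : ℝ, x + t • (p - x) ∈ Ω₁) :
    convexHull ℝ {x, p, q} ⊆ closure Ω₀ \ Ω₁ ∧
      ∀ w ∈ convexHull ℝ {x, p, q}, w ≠ x → w ∈ closure Ω₀ \ closure Ω₁ := by
  obtain ⟨t, ht⟩ := htrans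
  have hxcl : x ∈ closure Ω₁ := frontier_subset_closure hx
  obtain ⟨hp₀, hp₁⟩ := subset_sdiff.1 hp
  obtain ⟨hq₀, hq₁⟩ := subset_sdiff.1 hq
  have hhull₀ : convexHull ℝ {x, p, q} ⊆ closure Ω₀ :=
    convexHull_min (insert_subset (hp₀ (left_mem_segment ℝ x p))
      (pair_subset (hp₀ (right_mem_segment ℝ x p)) (hq₀ (right_mem_segment ℝ x q))))
      h0conv.closure
  have ht₀ : t < 0 := neg_of_add_smul_sub_mem h1conv h1open hxcl hp₁ ht
  have hhull₁ : Disjoint (convexHull ℝ {x, p, q}) Ω₁ :=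
    disjoint_convexHull_of_wbtw h1conv ht (wbtw_add_smul_sub_of_nonpos x p ht₀.le) hq₁
  refine ⟨subset_sdiff.2 ⟨hhull₀, hhull₁⟩, fun w hw hwx => ⟨hhull₀ hw, fun hwcl => ?_⟩⟩
  have hm := midpoint_mem_openSegment (𝕜 := ℝ) x w
  have hxhull : x ∈ convexHull ℝ {x, p, q} := subset_convexHull ℝ _ (mem_insert x _)
  exact disjoint_left.1 hhull₁
    ((convex_convexHull ℝ _).segment_subset hxhull hw (openSegment_subset_segment ℝ x w hm))
    (openSegment_subset_of_strictConvex_closure h1open h1conv hsc1 ⟨_, ht⟩ hxcl hwcl hwx.symm hm)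

/-- If `x ∈ ∂Ω₁`, `ℓ = [x,p] ⊆ Ω` is a transversal segment with endpoint `x` (the line
containing it intersects `Ω₁`), and `s = [x,q] ⊆ Ω` is another segment with endpoint `x`,
then the convex hull of `ℓ ∪ s` lies in `Ω = cl Ω₀ \ Ω₁`; moreover this convex hull, except
for the point `x` itself, lies inside `Ω* = cl Ω₀ \ cl Ω₁`. -/
theorem statement9 {d : ℕ} (hd : 2 ≤ d)
    (Ω₀ Ω₁ : Set (EuclideanSpace ℝ (Fin d)))
    (h0open : IsOpen Ω₀) (h0conv : Convex ℝ Ω₀) (h0ne : Ω₀.Nonempty)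
    (h0proper : Ω₀ ≠ Set.univ)
    (h1open : IsOpen Ω₁) (h1conv : Convex ℝ Ω₁) (h1ne : Ω₁.Nonempty)
    (hcl : closure Ω₁ ⊆ Ω₀)
    (hsc0 : StrictConvex ℝ (closure Ω₀)) (hsc1 : StrictConvex ℝ (closure Ω₁))
    (x p q : EuclideanSpace ℝ (Fin d))
    (hx : x ∈ frontier Ω₁) (hxΩ : x ∈ closure Ω₀ \ Ω₁)
    (hp : segment ℝ x p ⊆ closure Ω₀ \ Ω₁)
    (hq : segment ℝ x q ⊆ closure Ω₀ \ Ω₁)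
    (hpx : p ≠ x)
    (htrans : ∃ t : ℝ, x + t • (p - x) ∈ Ω₁) :
    convexHull ℝ {x, p, q} ⊆ closure Ω₀ \ Ω₁ ∧
      ∀ w ∈ convexHull ℝ {x, p, q}, w ≠ x → w ∈ closure Ω₀ \ closure Ω₁ :=
  statement9_general Ω₀ Ω₁ h0conv h1open h1conv hsc1 x p q hx hp hq htrans
end

section
/- Let Ω be a lens (Ω₀, Ω₁ satisfy cl(Ω₁) ⊆ Ω₀, the strict convexity condition, and the cone condition). Then for every x ∈ ∂Ω₁ the visibility set Vis_x = { y ∈ Ω : [x,y] ⊆ Ω } is compact, and the diameter of Vis_x is uniformly bounded as x runs through any compact subset of ∂Ω₁. -/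
/-!
If the visibility sets of points of a compact set `K ⊆ ∂Ω₁` were unbounded, there would be
arbitrarily long segments `[x, x + t w] ⊆ Ω` with `x ∈ K`, `‖w‖ = 1`; by compactness of `K` and of
the unit sphere they converge to a whole ray `x + ℝ≥0 v ⊆ Ω` with `x ∈ ∂Ω₁`. That ray lies in
`Ω₀`, so by the cone condition a translate of it lies in `Ω₁`, and convexity then puts the ray
itself into `cl Ω₁`. Strict convexity of `cl Ω₁` pushes the open segment `(x, x + 2v)` into
`int (cl Ω₁) = Ω₁`, contradicting `x + v ∈ Ω`. Compactness of a single `Vis_x` is the case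
`K = {x}`, since `Vis_x` is closed.
-/

noncomputable section

/-- The set of points of `ω` visible from `x` in `ω`. -/
def visSet {d : ℕ} (ω : Set (EuclideanSpace ℝ (Fin d))) (x : EuclideanSpace ℝ (Fin d)) :
    Set (EuclideanSpace ℝ (Fin d)) :=
  {y ∈ ω | segment ℝ x y ⊆ ω}

open Filter Topology Set

section ConvexRay

variable {E : Type*} [AddCommGroup E] [Module ℝ E] [TopologicalSpace E]
  [IsTopologicalAddGroup E] [ContinuousSMul ℝ E] {C : Set E} {x y v : E} {t : ℝ}

theorem Convex.add_smul_mem_closure_of_ray (hC : Convex ℝ C) (hx : x ∈ closure C)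
    (hray : ∀ s : ℝ, 0 ≤ s → y + s • v ∈ C) (ht : 0 ≤ t) : x + t • v ∈ closure C := by
  -- `s • (y + (t / s) • v) + (1 - s) • x ∈ closure C` tends to `x + t • v` as `s → 0⁺`
  have hlim : Tendsto (fun s : ℝ => s • y + (1 - s) • x + t • v) (𝓝[>] 0) (𝓝 (x + t • v)) := by
    have hcont : Continuous (fun s : ℝ => s • y + (1 - s) • x + t • v) := by fun_prop
    simpa using (hcont.tendsto 0).mono_left nhdsWithin_le_nhds
  rw [← closure_closure (s := C)]
  refine mem_closure_of_tendsto hlim ?_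
  filter_upwards [Ioo_mem_nhdsGT one_pos] with s ⟨hs0, hs1⟩
  have hfar : y + (t / s) • v ∈ closure C := subset_closure (hray _ (by positivity))
  convert hC.closure hfar hx hs0.le (sub_nonneg.mpr hs1.le) (by ring) using 1
  rw [smul_add, smul_smul, mul_div_cancel₀ _ hs0.ne']
  abel

theorem Convex.add_smul_mem_interior_of_ray_closure (hC : Convex ℝ C) (hx : x ∈ interior C)
    (hray : ∀ s : ℝ, 0 ≤ s → x + s • v ∈ closure C) (ht : 0 ≤ t) :
    x + t • v ∈ interior C := by
  convert hC.combo_interior_closure_mem_interior hx (hray (2 * t) (by positivity))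
    (a := 1 / 2) (b := 1 / 2) (by norm_num) (by norm_num) (by norm_num) using 1
  module

end ConvexRay

theorem add_smul_normalize_mem_segment {E : Type*} [NormedAddCommGroup E] [NormedSpace ℝ E]
    {x y : E} {t : ℝ} (ht : 0 ≤ t) (htle : t ≤ ‖y - x‖) :
    x + t • (‖y - x‖⁻¹ • (y - x)) ∈ segment ℝ x y := by
  rw [segment_eq_image', smul_smul, ← div_eq_mul_inv]
  exact ⟨t / ‖y - x‖, ⟨div_nonneg ht (norm_nonneg _), div_le_one_of_le₀ htle (norm_nonneg _)⟩, rfl⟩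

theorem IsClosed.exists_ray_of_long_segments {E : Type*} [NormedAddCommGroup E]
    [NormedSpace ℝ E] [ProperSpace E] {ω K : Set E} (hω : IsClosed ω) (hK : IsCompact K)
    (hseg : ∀ n : ℕ, ∃ x ∈ K, ∃ w : E, ‖w‖ = 1 ∧ ∀ t ∈ Icc (0 : ℝ) n, x + t • w ∈ ω) :
    ∃ x ∈ K, ∃ v : E, ‖v‖ = 1 ∧ ∀ t : ℝ, 0 ≤ t → x + t • v ∈ ω := by
  choose X hXK W hW hXW using hseg
  obtain ⟨⟨x, v⟩, ⟨hx, hv⟩, φ, hφ, hlim⟩ :=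
    (hK.prod (isCompact_sphere (0 : E) 1)).tendsto_subseq (x := fun n => (X n, W n))
      fun n => ⟨hXK n, mem_sphere_zero_iff_norm.mpr (hW n)⟩
  refine ⟨x, hx, v, mem_sphere_zero_iff_norm.mp hv, fun t ht => ?_⟩
  refine hω.mem_of_tendsto (hlim.fst_nhds.add (hlim.snd_nhds.const_smul t)) ?_
  filter_upwards [eventually_ge_atTop ⌈t⌉₊] with n hn
  exact hXW (φ n) t ⟨ht, (Nat.le_ceil t).trans (by exact_mod_cast hn.trans hφ.le_apply)⟩

section Visibility

variable {d : ℕ}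

theorem isClosed_visSet {ω : Set (EuclideanSpace ℝ (Fin d))} (hω : IsClosed ω)
    (x : EuclideanSpace ℝ (Fin d)) : IsClosed (visSet ω x) := by
  have hrw : visSet ω x = ω ∩ ⋂ θ ∈ Icc (0 : ℝ) 1, (fun y => x + θ • (y - x)) ⁻¹' ω := by
    ext y
    simp only [visSet, segment_eq_image', mem_inter_iff, mem_iInter, mem_preimage,
      Set.mem_ofPred_eq, subset_def, forall_mem_image]
  rw [hrw]
  exact hω.inter (isClosed_biInter fun θ _ => hω.preimage (by fun_prop))

theorem exists_ray_of_not_isBounded_biUnion_visSet {ω K : Set (EuclideanSpace ℝ (Fin d))}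
    (hω : IsClosed ω) (hK : IsCompact K)
    (hunb : ¬ Bornology.IsBounded (⋃ x ∈ K, visSet ω x)) :
    ∃ x ∈ K, ∃ v, v ≠ 0 ∧ ∀ t : ℝ, 0 ≤ t → x + t • v ∈ ω := by
  obtain ⟨R, hR⟩ := hK.isBounded.exists_norm_le
  rw [isBounded_iff_forall_norm_le] at hunb
  push Not at hunb
  obtain ⟨x, hxK, v, hv, hray⟩ := hω.exists_ray_of_long_segments hK fun n => by
    obtain ⟨y, hy, hny⟩ := hunb (n + R)
    obtain ⟨x, hxK, hyx⟩ := mem_iUnion₂.mp hy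
    have hlong : (n : ℝ) < ‖y - x‖ := by
      linarith [norm_sub_norm_le y x, hR x hxK]
    have hpos : 0 < ‖y - x‖ := (Nat.cast_nonneg n).trans_lt hlong
    refine ⟨x, hxK, ‖y - x‖⁻¹ • (y - x), ?_, fun t ht => ?_⟩
    · rw [norm_smul, norm_inv, norm_norm, inv_mul_cancel₀ hpos.ne']
    · exact hyx.2 (add_smul_normalize_mem_segment ht.1 (ht.2.trans hlong.le))
  exact ⟨x, hxK, v, norm_ne_zero_iff.mp (by rw [hv]; exact one_ne_zero), hray⟩

theorem not_ray_subset_lens {Ω₀ Ω₁ : Set (EuclideanSpace ℝ (Fin d))}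
    (h0open : IsOpen Ω₀) (h0conv : Convex ℝ Ω₀)
    (h1open : IsOpen Ω₁) (h1conv : Convex ℝ Ω₁) (h1ne : Ω₁.Nonempty)
    (hcl : closure Ω₁ ⊆ Ω₀) (hsc1 : StrictConvex ℝ (closure Ω₁))
    (hcone : ConeCondition Ω₀ Ω₁) {x v : EuclideanSpace ℝ (Fin d)} (hx : x ∈ frontier Ω₁)
    (hv : v ≠ 0) : ¬ ∀ t : ℝ, 0 ≤ t → x + t • v ∈ closure Ω₀ \ Ω₁ := by
  intro hray
  have hx1 : x ∈ closure Ω₁ := frontier_subset_closure hx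
  have hrayΩ₀ : ∀ t : ℝ, 0 ≤ t → x + t • v ∈ Ω₀ := fun t ht => by
    simpa only [h0open.interior_eq] using h0conv.add_smul_mem_interior_of_ray_closure
      (by rw [h0open.interior_eq]; exact hcl hx1) (fun s hs => (hray s hs).1) ht
  obtain ⟨y, hy⟩ := hcone x v hv hrayΩ₀
  have hfar : x + (2 : ℝ) • v ∈ closure Ω₁ := h1conv.add_smul_mem_closure_of_ray hx1 hy zero_le_two
  have hmid : x + (1 : ℝ) • v ∈ interior (closure Ω₁) :=
    hsc1.openSegment_subset hx1 hfar (by simpa using hv)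
      ⟨1 / 2, 1 / 2, by norm_num, by norm_num, by norm_num, by module⟩
  rw [h1conv.interior_closure_eq_interior_of_nonempty_interior (by rwa [h1open.interior_eq]),
    h1open.interior_eq] at hmid
  exact (hray 1 zero_le_one).2 hmid

theorem isBounded_biUnion_visSet_lens {Ω₀ Ω₁ : Set (EuclideanSpace ℝ (Fin d))}
    (h0open : IsOpen Ω₀) (h0conv : Convex ℝ Ω₀)
    (h1open : IsOpen Ω₁) (h1conv : Convex ℝ Ω₁) (h1ne : Ω₁.Nonempty)
    (hcl : closure Ω₁ ⊆ Ω₀) (hsc1 : StrictConvex ℝ (closure Ω₁))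
    (hcone : ConeCondition Ω₀ Ω₁) {K : Set (EuclideanSpace ℝ (Fin d))}
    (hK : K ⊆ frontier Ω₁) (hKc : IsCompact K) :
    Bornology.IsBounded (⋃ x ∈ K, visSet (closure Ω₀ \ Ω₁) x) := by
  by_contra hunb
  obtain ⟨x, hxK, v, hv, hray⟩ :=
    exists_ray_of_not_isBounded_biUnion_visSet (isClosed_closure.sdiff h1open) hKc hunb
  exact not_ray_subset_lens h0open h0conv h1open h1conv h1ne hcl hsc1 hcone (hK hxK) hv hray

end Visibility

theorem statement12_general {d : ℕ}
    (Ω₀ Ω₁ : Set (EuclideanSpace ℝ (Fin d)))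
    (h0open : IsOpen Ω₀) (h0conv : Convex ℝ Ω₀)
    (h1open : IsOpen Ω₁) (h1conv : Convex ℝ Ω₁) (h1ne : Ω₁.Nonempty)
    (hcl : closure Ω₁ ⊆ Ω₀)
    (hsc1 : StrictConvex ℝ (closure Ω₁))
    (hcone : ConeCondition Ω₀ Ω₁) :
    (∀ x ∈ frontier Ω₁, IsCompact (visSet (closure Ω₀ \ Ω₁) x)) ∧
    ∀ K : Set (EuclideanSpace ℝ (Fin d)), K ⊆ frontier Ω₁ → IsCompact K →
      ∃ C : ℝ, ∀ x ∈ K, ∀ y ∈ visSet (closure Ω₀ \ Ω₁) x,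
        ∀ z ∈ visSet (closure Ω₀ \ Ω₁) x, dist y z ≤ C := by
  have hΩ : IsClosed (closure Ω₀ \ Ω₁) := isClosed_closure.sdiff h1open
  have hbdd : ∀ K, K ⊆ frontier Ω₁ → IsCompact K →
      Bornology.IsBounded (⋃ x ∈ K, visSet (closure Ω₀ \ Ω₁) x) := fun _ hK hKc =>
    isBounded_biUnion_visSet_lens h0open h0conv h1open h1conv h1ne hcl hsc1 hcone hK hKc
  refine ⟨fun x hx => ?_, fun K hK hKc => ?_⟩
  · refine Metric.isCompact_of_isClosed_isBounded (isClosed_visSet hΩ x) ?_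
    exact (hbdd {x} (singleton_subset_iff.mpr hx) isCompact_singleton).subset (by simp)
  · obtain ⟨C, hC⟩ := Metric.isBounded_iff.mp (hbdd K hK hKc)
    exact ⟨C, fun x hx y hy z hz => hC (mem_iUnion₂.mpr ⟨x, hx, hy⟩) (mem_iUnion₂.mpr ⟨x, hx, hz⟩)⟩

/-- For a lens `Ω = cl Ω₀ \ Ω₁`, the visibility set `Vis_x` is compact for every
`x ∈ ∂Ω₁`, and its diameter is uniformly bounded as `x` runs through any compact
subset of `∂Ω₁`. -/
theorem statement12 {d : ℕ} (hd : 2 ≤ d)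
    (Ω₀ Ω₁ : Set (EuclideanSpace ℝ (Fin d)))
    (h0open : IsOpen Ω₀) (h0conv : Convex ℝ Ω₀) (h0ne : Ω₀.Nonempty)
    (h0proper : Ω₀ ≠ Set.univ)
    (h1open : IsOpen Ω₁) (h1conv : Convex ℝ Ω₁) (h1ne : Ω₁.Nonempty)
    (hcl : closure Ω₁ ⊆ Ω₀)
    (hsc0 : StrictConvex ℝ (closure Ω₀)) (hsc1 : StrictConvex ℝ (closure Ω₁))
    (hcone : ConeCondition Ω₀ Ω₁) :
    (∀ x ∈ frontier Ω₁, IsCompact (visSet (closure Ω₀ \ Ω₁) x)) ∧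
    ∀ K : Set (EuclideanSpace ℝ (Fin d)), K ⊆ frontier Ω₁ → IsCompact K →
      ∃ C : ℝ, ∀ x ∈ K, ∀ y ∈ visSet (closure Ω₀ \ Ω₁) x,
        ∀ z ∈ visSet (closure Ω₀ \ Ω₁) x, dist y z ≤ C :=
  statement12_general Ω₀ Ω₁ h0open h0conv h1open h1conv h1ne hcl hsc1 hcone
end
end
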